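/- Let G be a graph and let G' be obtained from G by attaching r ≥ 5 pendant vertices to each vertex of G and subdividing each edge of G with two new vertices. If v ∈ V(G) and f is a 4RDF of G' with f(v) ≤ 4, then f must assign label 5 to v or positive labels to all r pendant leaves of v, so that the total label on N[v] ∩ ({v} ∪ leaves(v)) is at least 5; consequently every 4RDF of G' has weight at least 5|V(G)|. -/

import Mathlib

open scoped Classical
open Finset

/-- A quadruple Roman dominating function: labels in {0,…,5}, and every vertex with
label at most 3 satisfies the quadruple Roman condition. -/
def Is4RDF {V : Type*} [Fintype V] (G : SimpleGraph V) (f : V → ℕ) : Prop :=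
  (∀ v, f v ≤ 5) ∧
  ∀ x, f x ≤ 3 →
    f x + ∑ v ∈ G.neighborFinset x, f v ≥
      ((G.neighborFinset x).filter fun y => f y ≠ 0).card + 4

/-- The weight of a labelling. -/
def rdfWeight {V : Type*} [Fintype V] (f : V → ℕ) : ℕ := ∑ v, f v

/-- The quadruple Roman domination number. -/
noncomputable def gamma4R {V : Type*} [Fintype V] (G : SimpleGraph V) : ℕ :=
  sInf {w | ∃ f, Is4RDF G f ∧ rdfWeight f = w}

/-- A dominating set. -/
def IsDomSet {V : Type*} [Fintype V] (G : SimpleGraph V) (D : Finset V) : Prop :=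
  ∀ v, v ∉ D → ∃ u ∈ D, G.Adj u v

/-- The domination number. -/
noncomputable def gammaDom {V : Type*} [Fintype V] (G : SimpleGraph V) : ℕ :=
  sInf {n | ∃ D : Finset V, IsDomSet G D ∧ D.card = n}

/-- An efficient dominating set: every vertex lies in exactly one closed
neighborhood of a vertex of `D`. -/
def IsEfficientDomSet {V : Type*} [Fintype V] (G : SimpleGraph V) (D : Finset V) : Prop :=
  ∀ v : V, ∃! u, u ∈ D ∧ (u = v ∨ G.Adj u v)

/-- The graph obtained from `G` by attaching `r` pendant leaves to each vertex and
subdividing each edge with two new vertices: vertex `Sum.inl v` is an original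
vertex, `Sum.inr (Sum.inl (v, j))` is the `j`-th leaf at `v`, and for each
adjacent pair `e = (u, w)` the vertex `Sum.inr (Sum.inr e)` is the subdivision
vertex next to `u` on the edge `uw`. -/
def subdivPendant {V : Type*} (G : SimpleGraph V) (r : ℕ) :
    SimpleGraph (V ⊕ ((V × Fin r) ⊕ {e : V × V // G.Adj e.1 e.2})) where
  Adj a b :=
    match a, b with
    | Sum.inl u, Sum.inr (Sum.inl (v, _)) => u = v
    | Sum.inr (Sum.inl (v, _)), Sum.inl u => u = v
    | Sum.inl u, Sum.inr (Sum.inr e) => u = e.val.1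
    | Sum.inr (Sum.inr e), Sum.inl u => u = e.val.1
    | Sum.inr (Sum.inr e), Sum.inr (Sum.inr e') =>
        e.val.1 = e'.val.2 ∧ e.val.2 = e'.val.1
    | _, _ => False
  symm := by
    constructor
    rintro (u | ⟨v, j⟩ | e) (u' | ⟨v', j'⟩ | e') h
    · exact h.elim
    · exact h
    · exact h
    · exact h
    · exact h.elim
    · exact h.elim
    · exact h
    · exact h.elim
    · exact ⟨h.2.symm, h.1.symm⟩
  loopless := by
    constructor
    rintro (u | ⟨v, j⟩ | e) h
    · exact h
    · exact h
    · have he := e.prop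
      rw [h.1] at he
      exact G.loopless.irrefl _ he

/-
A leaf `x` of `G'` labelled `0` makes the quadruple Roman condition at `x` read
`f v ≥ [f v ≠ 0] + 4` for its support vertex `v`, so `f v ≥ 5`. Hence at every original vertex
`v` either `f v ≥ 5` or all `r ≥ 5` leaves of `v` carry a positive label; in both cases `v` and its
leaves carry a total label of at least `5`, and these blocks are disjoint.
-/

theorem Is4RDF.five_le_of_neighborFinset_eq_singleton {V : Type*} [Fintype V]
    {G : SimpleGraph V} {f : V → ℕ} (hf : Is4RDF G f) {x v : V}
    (hx : G.neighborFinset x = {v}) (hfx : f x = 0) : 5 ≤ f v := by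
  have hcond := hf.2 x (by omega)
  rw [hx, sum_singleton, filter_singleton] at hcond
  split_ifs at hcond <;> simp_all

theorem subdivPendant_neighborFinset_leaf {V : Type*} [Fintype V] (G : SimpleGraph V) (r : ℕ)
    (v : V) (j : Fin r) :
    (subdivPendant G r).neighborFinset (Sum.inr (Sum.inl (v, j))) = {Sum.inl v} := by
  ext (u | x | e) <;> rw [SimpleGraph.mem_neighborFinset] <;> simp [subdivPendant, eq_comm]

theorem subdivPendant_five_le_add_sum_leaves {V : Type*} [Fintype V] {G : SimpleGraph V}
    {r : ℕ} (hr : 5 ≤ r) {f : V ⊕ ((V × Fin r) ⊕ {e : V × V // G.Adj e.1 e.2}) → ℕ}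
    (hf : Is4RDF (subdivPendant G r) f) (v : V) :
    5 ≤ f (Sum.inl v) + ∑ j : Fin r, f (Sum.inr (Sum.inl (v, j))) := by
  by_cases hzero : ∃ j, f (Sum.inr (Sum.inl (v, j))) = 0
  · obtain ⟨j, hj⟩ := hzero
    have := hf.five_le_of_neighborFinset_eq_singleton
      (subdivPendant_neighborFinset_leaf G r v j) hj
    omega
  · push Not at hzero
    have hleaves : r ≤ ∑ j : Fin r, f (Sum.inr (Sum.inl (v, j))) := by
      simpa using card_nsmul_le_sum univ _ 1 fun j _ => Nat.one_le_iff_ne_zero.2 (hzero j)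
    omega

theorem sum_add_sum_leaves_le_rdfWeight {V : Type*} [Fintype V] {G : SimpleGraph V} {r : ℕ}
    (f : V ⊕ ((V × Fin r) ⊕ {e : V × V // G.Adj e.1 e.2}) → ℕ) :
    ∑ v : V, (f (Sum.inl v) + ∑ j : Fin r, f (Sum.inr (Sum.inl (v, j)))) ≤ rdfWeight f := by
  rw [rdfWeight, Fintype.sum_sum_type, Fintype.sum_sum_type, Fintype.sum_prod_type,
    sum_add_distrib]
  omega

/-- In `G'` (obtained from `G` by attaching `r ≥ 5` leaves to each vertex and
subdividing each edge twice), any 4RDF `f` with `f(v) ≤ 4` on an original vertex `v`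
must place a total label of at least 5 on `v` together with its leaves; consequently
every 4RDF of `G'` has weight at least `5·|V(G)|`. -/
theorem subdivPendant_4RDF_lower {V : Type*} [Fintype V] (G : SimpleGraph V)
    (r : ℕ) (hr : 5 ≤ r) (f : V ⊕ ((V × Fin r) ⊕ {e : V × V // G.Adj e.1 e.2}) → ℕ)
    (hf : Is4RDF (subdivPendant G r) f) :
    (∀ v : V, f (Sum.inl v) ≤ 4 →
      5 ≤ f (Sum.inl v) + ∑ j : Fin r, f (Sum.inr (Sum.inl (v, j)))) ∧
    5 * Fintype.card V ≤ rdfWeight f := by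
  have hblock := subdivPendant_five_le_add_sum_leaves hr hf
  refine ⟨fun v _ => hblock v, ?_⟩
  calc 5 * Fintype.card V
      ≤ ∑ v : V, (f (Sum.inl v) + ∑ j : Fin r, f (Sum.inr (Sum.inl (v, j)))) := by
        simpa [mul_comm] using card_nsmul_le_sum univ _ 5 fun v _ => hblock v
    _ ≤ rdfWeight f := sum_add_sum_leaves_le_rdfWeight f
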